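/- Let I ⊆ Loc_>(K[X]) be an ideal, > a local order, and G = {g_1,...,g_s} ⊆ I a set of polynomials. If G generates I and NF(spoly(g_i,g_j) | G) = 0 for all i < j (where NF is a weak normal form), then G is a standard basis of I, i.e., lt(I) = ⟨lt(g_1),...,lt(g_s)⟩. -/

import Mathlib

/-!
Pass to `K[[X]]`, where the elements of `unitSet` are invertible: if `u * f` lies in the ideal
generated by `G`, then `h = u * f` is a combination `∑ l, a l * G l` with power-series
coefficients, and `lm h = lm f`. The top of such a representation is the largest level
`ν + lm (G l)` over the monomials `X^ν` of the `a l`; it is at least `lm h`. If it is strictly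
larger, the top-level terms cancel, so they form a combination of S-polynomials, and replacing
these by their standard representations (the weak normal forms divided by their units) strictly
lowers the top. A local order is not well-founded downwards, so this descent need not stop; but
a given coefficient is changed only at finitely many tops, so chains of rewrites converge
coefficientwise and Zorn's lemma gives a representation with top `lm f`, which is then a
multiple of some `lm (G i)`.
-/

open MvPolynomial

def IsSemigroupOrder {σ : Type*} (r : (σ →₀ ℕ) → (σ →₀ ℕ) → Prop) : Prop :=
  Transitive r ∧ (∀ a b, a ≠ b → r a b ∨ r b a) ∧ (∀ a b, r a b → ¬ r b a) ∧
    ∀ a b c, r a b → r (a + c) (b + c)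

def IsLocalOrder {σ : Type*} (r : (σ →₀ ℕ) → (σ →₀ ℕ) → Prop) : Prop :=
  IsSemigroupOrder r ∧ ∀ i : σ, r 0 (Finsupp.single i 1)

def IsLeadMon {σ : Type*} {K : Type*} [CommSemiring K]
    (r : (σ →₀ ℕ) → (σ →₀ ℕ) → Prop) (f : MvPolynomial σ K) (α : σ →₀ ℕ) : Prop :=
  α ∈ f.support ∧ ∀ β ∈ f.support, β ≠ α → r α β

/-- The multiplicative set `S_>` of polynomials with constant term `1`
(the units of `Loc_>(K[X])` up to scalars). -/
noncomputable def unitSet (n : ℕ) (K : Type*) [Field K] : Submonoid (MvPolynomial (Fin n) K) :=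
  Submonoid.comap
    (constantCoeff : MvPolynomial (Fin n) K →+* K).toMonoidHom (⊥ : Submonoid K)

/-- The S-polynomial of `f` and `g` with leading monomials `α`, `β`. -/
noncomputable def spoly {n : ℕ} {K : Type*} [Field K]
    (f g : MvPolynomial (Fin n) K) (α β : Fin n →₀ ℕ) : MvPolynomial (Fin n) K :=
  C (f.coeff α)⁻¹ * monomial (α ⊔ β - α) 1 * f
    - C (g.coeff β)⁻¹ * monomial (α ⊔ β - β) 1 * g

open Relation

theorem Relation.ReflGen.rel_of_ne {α : Type*} {r : α → α → Prop} {a b : α}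
    (h : ReflGen r a b) (hne : a ≠ b) : r a b :=
  ((reflGen_iff r a b).1 h).resolve_left hne.symm

namespace IsLocalOrder

variable {σ : Type*} {r : (σ →₀ ℕ) → (σ →₀ ℕ) → Prop} (hr : IsLocalOrder r)
include hr

theorem trans {a b c : σ →₀ ℕ} (hab : r a b) (hbc : r b c) : r a c := hr.1.1 hab hbc

theorem total {a b : σ →₀ ℕ} (h : a ≠ b) : r a b ∨ r b a := hr.1.2.1 a b h

theorem asymm {a b : σ →₀ ℕ} (h : r a b) : ¬ r b a := hr.1.2.2.1 a b h

theorem irrefl (a : σ →₀ ℕ) : ¬ r a a := fun h => hr.asymm h h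

theorem add_right {a b : σ →₀ ℕ} (c : σ →₀ ℕ) (h : r a b) : r (a + c) (b + c) :=
  hr.1.2.2.2 a b c h

theorem add_left {a b : σ →₀ ℕ} (c : σ →₀ ℕ) (h : r a b) : r (c + a) (c + b) := by
  simpa only [add_comm c] using hr.add_right c h

theorem reflGen_trans {a b c : σ →₀ ℕ} (hab : ReflGen r a b) (hbc : ReflGen r b c) :
    ReflGen r a c := by
  rcases hab with _ | hab
  · exact hbc
  rcases hbc with _ | hbc
  · exact .single hab
  · exact .single (hr.trans hab hbc)

theorem trans_reflGen {a b c : σ →₀ ℕ} (hab : r a b) (hbc : ReflGen r b c) : r a c := by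
  rcases hbc with _ | hbc
  exacts [hab, hr.trans hab hbc]

theorem reflGen_trans_rel {a b c : σ →₀ ℕ} (hab : ReflGen r a b) (hbc : r b c) : r a c := by
  rcases hab with _ | hab
  exacts [hbc, hr.trans hab hbc]

theorem not_reflGen_of_rel {a b : σ →₀ ℕ} (h : r a b) : ¬ ReflGen r b a := by
  rintro (_ | h')
  exacts [hr.irrefl a h, hr.asymm h h']

theorem reflGen_add_add {a b c d : σ →₀ ℕ} (hab : ReflGen r a b) (hcd : ReflGen r c d) :
    ReflGen r (a + c) (b + d) := by
  rcases hab with _ | hab <;> rcases hcd with _ | hcd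
  · exact .refl
  · exact .single (hr.add_left a hcd)
  · exact .single (hr.add_right c hab)
  · exact .single (hr.trans (hr.add_right c hab) (hr.add_left b hcd))

theorem rel_add_add {a b c d : σ →₀ ℕ} (hab : ReflGen r a b) (hcd : ReflGen r c d)
    (hne : (a, c) ≠ (b, d)) : r (a + c) (b + d) := by
  rcases hab with _ | hab <;> rcases hcd with _ | hcd
  · exact absurd rfl hne
  · exact hr.add_left a hcd
  · exact hr.add_right c hab
  · exact hr.trans (hr.add_right c hab) (hr.add_left b hcd)

theorem reflGen_zero (β : σ →₀ ℕ) : ReflGen r 0 β := by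
  induction β using Finsupp.induction_linear with
  | zero => exact .refl
  | add f g hf hg => simpa using hr.reflGen_add_add hf hg
  | single i m =>
    induction m with
    | zero => simpa using ReflGen.refl
    | succ m ih => simpa [Finsupp.single_add] using hr.reflGen_add_add ih (.single (hr.2 i))

theorem reflGen_of_le {a b : σ →₀ ℕ} (h : a ≤ b) : ReflGen r a b := by
  obtain ⟨c, rfl⟩ := exists_add_of_le h
  simpa using hr.reflGen_add_add (.refl (a := a)) (hr.reflGen_zero c)

/-- Reverse Dickson: divisibility refines `ReflGen r`, so the well-quasi-order `≤` on
exponents forbids infinite `r`-ascending chains. -/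
theorem wellFounded [Finite σ] : WellFounded r := by
  have : IsTrans (σ →₀ ℕ) r := ⟨fun _ _ _ => hr.trans⟩
  have hwqo : WellQuasiOrdered (ReflGen r) := fun f =>
    (wellQuasiOrdered_le f).imp fun _ => Exists.imp fun _ h => ⟨h.1, hr.reflGen_of_le h.2⟩
  exact hwqo.wellFounded.mono fun _ _ h => ⟨.single h, hr.not_reflGen_of_rel h⟩

theorem exists_reflGen_forall [Finite σ] {S : Set (σ →₀ ℕ)} (hS : S.Nonempty) :
    ∃ m ∈ S, ∀ x ∈ S, ReflGen r m x := by
  obtain ⟨m, hm, hmin⟩ := hr.wellFounded.has_min S hS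
  refine ⟨m, hm, fun x hx => ?_⟩
  rcases eq_or_ne m x with rfl | hne
  · exact .refl
  · exact .single ((hr.total hne).resolve_right (hmin x hx))

end IsLocalOrder

section LeadMonomial

variable {σ K : Type*} {r : (σ →₀ ℕ) → (σ →₀ ℕ) → Prop}

def IsLeadMonSeries [Semiring K] (r : (σ →₀ ℕ) → (σ →₀ ℕ) → Prop)
    (p : MvPowerSeries σ K) (δ : σ →₀ ℕ) : Prop :=
  MvPowerSeries.coeff δ p ≠ 0 ∧ ∀ ε, MvPowerSeries.coeff ε p ≠ 0 → ReflGen r δ ε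

theorem IsLeadMon.coe [CommSemiring K] {f : MvPolynomial σ K} {β : σ →₀ ℕ}
    (h : IsLeadMon r f β) : IsLeadMonSeries r (f : MvPowerSeries σ K) β := by
  refine ⟨by simpa [MvPolynomial.coeff_coe] using h.1, fun ε hε => ?_⟩
  rw [MvPolynomial.coeff_coe] at hε
  rcases eq_or_ne ε β with rfl | hne
  · exact .refl
  · exact .single (h.2 ε (MvPolynomial.mem_support_iff.mpr hε) hne)

namespace IsLeadMonSeries

variable [CommSemiring K] {p q : MvPowerSeries σ K} {δ ε : σ →₀ ℕ}

theorem ne_zero (h : IsLeadMonSeries r p δ) : p ≠ 0 := by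
  rintro rfl
  exact h.1 (map_zero _)

theorem unique (hr : IsLocalOrder r) (hδ : IsLeadMonSeries r p δ)
    (hε : IsLeadMonSeries r p ε) : δ = ε := by
  by_contra hne
  exact hr.not_reflGen_of_rel ((hδ.2 ε hε.1).rel_of_ne hne) (hε.2 δ hδ.1)

theorem coeff_eq_zero_of_rel (hr : IsLocalOrder r) (hδ : IsLeadMonSeries r p δ)
    {γ : σ →₀ ℕ} (hγ : r γ δ) : MvPowerSeries.coeff γ p = 0 := by
  by_contra h
  exact hr.not_reflGen_of_rel hγ (hδ.2 γ h)

theorem coeff_mul (hr : IsLocalOrder r) (hp : IsLeadMonSeries r p δ)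
    (hq : IsLeadMonSeries r q ε) :
    MvPowerSeries.coeff (δ + ε) (p * q) =
      MvPowerSeries.coeff δ p * MvPowerSeries.coeff ε q := by
  classical
  rw [MvPowerSeries.coeff_mul]
  refine Finset.sum_eq_single_of_mem (δ, ε) (by simp) fun ⟨x, y⟩ hxy hne => ?_
  rw [Finset.HasAntidiagonal.mem_antidiagonal] at hxy
  by_contra hval
  have hlt := hr.rel_add_add (hp.2 x (left_ne_zero_of_mul hval))
    (hq.2 y (right_ne_zero_of_mul hval)) (Ne.symm hne)
  exact hr.irrefl _ (hxy ▸ hlt)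

theorem mul [NoZeroDivisors K] (hr : IsLocalOrder r) (hp : IsLeadMonSeries r p δ)
    (hq : IsLeadMonSeries r q ε) : IsLeadMonSeries r (p * q) (δ + ε) := by
  classical
  refine ⟨by rw [hp.coeff_mul hr hq]; exact mul_ne_zero hp.1 hq.1, fun ζ hζ => ?_⟩
  rw [MvPowerSeries.coeff_mul] at hζ
  obtain ⟨⟨x, y⟩, hxy, hval⟩ := Finset.exists_ne_zero_of_sum_ne_zero hζ
  rw [Finset.HasAntidiagonal.mem_antidiagonal] at hxy
  rw [← hxy]
  exact hr.reflGen_add_add (hp.2 x (left_ne_zero_of_mul hval)) (hq.2 y (right_ne_zero_of_mul hval))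

end IsLeadMonSeries

namespace IsLocalOrder

variable (hr : IsLocalOrder r)
include hr

theorem exists_isLeadMonSeries [Finite σ] [Semiring K] {p : MvPowerSeries σ K} (hp : p ≠ 0) :
    ∃ δ, IsLeadMonSeries r p δ := by
  obtain ⟨δ, hδ, hmax⟩ :=
    hr.exists_reflGen_forall (S := {δ | MvPowerSeries.coeff δ p ≠ 0})
    (by simpa [Set.nonempty_iff_ne_empty, Set.eq_empty_iff_forall_notMem, MvPowerSeries.ext_iff]
      using hp)
  exact ⟨δ, hδ, hmax⟩

theorem isLeadMonSeries_zero_iff [Semiring K] {p : MvPowerSeries σ K} :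
    IsLeadMonSeries r p 0 ↔ MvPowerSeries.constantCoeff p ≠ 0 := by
  rw [← MvPowerSeries.coeff_zero_eq_constantCoeff_apply]
  refine ⟨And.left, fun h => ⟨h, fun ε _ => hr.reflGen_zero ε⟩⟩

theorem reflGen_add_of_isLeadMonSeries_mul [Finite σ] [CommSemiring K] [NoZeroDivisors K]
    {p q : MvPowerSeries σ K} {α ν τ : σ →₀ ℕ} (hpq : IsLeadMonSeries r (p * q) ν)
    (hq : IsLeadMonSeries r q α) (hτ : MvPowerSeries.coeff τ p ≠ 0) :
    ReflGen r ν (τ + α) := by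
  obtain ⟨δ, hδ⟩ := hr.exists_isLeadMonSeries (p := p) (fun hp => hτ (by simp [hp]))
  rw [← (hδ.mul hr hq).unique hr hpq]
  exact hr.reflGen_add_add (hδ.2 τ hτ) .refl

end IsLocalOrder

end LeadMonomial

namespace MvPowerSeries

variable {σ K : Type*} [Field K] {r : (σ →₀ ℕ) → (σ →₀ ℕ) → Prop}

noncomputable def spoly (f g : MvPowerSeries σ K) (a b : σ →₀ ℕ) : MvPowerSeries σ K :=
  monomial (a ⊔ b - a) (coeff a f)⁻¹ * f - monomial (a ⊔ b - b) (coeff b g)⁻¹ * g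

@[simp]
theorem spoly_self (f : MvPowerSeries σ K) (a : σ →₀ ℕ) : spoly f f a a = 0 := by
  simp [spoly]

theorem monomial_mul_spoly {f g : MvPowerSeries σ K} {a b γ : σ →₀ ℕ}
    (hab : a ⊔ b ≤ γ) (hf : coeff a f ≠ 0) (c : K) :
    monomial (γ - a ⊔ b) (c * coeff a f) * spoly f g a b =
      monomial (γ - a) c * f - monomial (γ - b) (c * coeff a f * (coeff b g)⁻¹) * g := by
  rw [spoly, mul_sub, ← mul_assoc, ← mul_assoc, monomial_mul_monomial, monomial_mul_monomial,
    tsub_add_tsub_cancel hab le_sup_left, tsub_add_tsub_cancel hab le_sup_right,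
    mul_assoc c, mul_inv_cancel₀ hf, mul_one]

/-- Against a pivot `j`, a slice whose leading coefficients cancel is a combination of the
S-series `spoly (g i) (g j)`. -/
theorem sum_monomial_mul_spoly {ι : Type*} [Fintype ι] {g : ι → MvPowerSeries σ K}
    {α : ι → σ →₀ ℕ} (hlc : ∀ i, coeff (α i) (g i) ≠ 0) {γ : σ →₀ ℕ} {c : ι → K} {j : ι}
    (hlcm : ∀ i, c i ≠ 0 → α i ⊔ α j ≤ γ) (hsum : ∑ i, c i * coeff (α i) (g i) = 0) :
    ∑ i, monomial (γ - α i ⊔ α j) (c i * coeff (α i) (g i)) * spoly (g i) (g j) (α i) (α j) =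
      ∑ i, monomial (γ - α i) (c i) * g i := by
  have hterm : ∀ i, monomial (γ - α i ⊔ α j) (c i * coeff (α i) (g i)) *
      spoly (g i) (g j) (α i) (α j) = monomial (γ - α i) (c i) * g i -
        monomial (γ - α j) (c i * coeff (α i) (g i) * (coeff (α j) (g j))⁻¹) * g j := by
    intro i
    by_cases hi : c i = 0
    · simp [hi]
    · exact monomial_mul_spoly (hlcm i hi) (hlc i) (c i)
  rw [Finset.sum_congr rfl fun i _ => hterm i, Finset.sum_sub_distrib, ← Finset.sum_mul,
    ← map_sum, ← Finset.sum_mul, hsum, zero_mul, map_zero, zero_mul, sub_zero]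

theorem isLeadMonSeries_monomial {e : σ →₀ ℕ} {x : K} (hx : x ≠ 0) :
    IsLeadMonSeries r (monomial e x) e := by
  classical
  refine ⟨by simpa using hx, fun ε hε => ?_⟩
  rw [coeff_monomial, ite_ne_right_iff] at hε
  rw [hε.1]

theorem rel_sup_of_coeff_spoly_ne_zero (hr : IsLocalOrder r) {f g : MvPowerSeries σ K}
    {a b ζ : σ →₀ ℕ} (hf : IsLeadMonSeries r f a) (hg : IsLeadMonSeries r g b)
    (hζ : coeff ζ (spoly f g a b) ≠ 0) : r (a ⊔ b) ζ := by
  have hlcm : coeff (a ⊔ b) (spoly f g a b) = 0 := by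
    rw [spoly, map_sub, coeff_monomial_mul, coeff_monomial_mul, if_pos tsub_le_self,
      if_pos tsub_le_self, tsub_tsub_cancel_of_le le_sup_left,
      tsub_tsub_cancel_of_le le_sup_right, inv_mul_cancel₀ hf.1, inv_mul_cancel₀ hg.1, sub_self]
  -- each of the two terms has lead monomial `a ⊔ b`
  have hterm : ∀ {p : MvPowerSeries σ K} {c : σ →₀ ℕ}, IsLeadMonSeries r p c →
      c ≤ a ⊔ b →
      coeff ζ (monomial (a ⊔ b - c) (coeff c p)⁻¹ * p) ≠ 0 → ReflGen r (a ⊔ b) ζ := by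
    intro p c hp hc hζ
    have := ((isLeadMonSeries_monomial (inv_ne_zero hp.1)).mul hr hp).2 ζ hζ
    rwa [tsub_add_cancel_of_le hc] at this
  have hζ' : ReflGen r (a ⊔ b) ζ := by
    rw [spoly, map_sub] at hζ
    by_cases h : coeff ζ (monomial (a ⊔ b - a) (coeff a f)⁻¹ * f) = 0
    · exact hterm hg le_sup_right (by simpa [h] using hζ)
    · exact hterm hf le_sup_left h
  exact hζ'.rel_of_ne (by rintro rfl; exact hζ hlcm)

end MvPowerSeries

section Levels

variable {ι σ K : Type*} [Field K] {r : (σ →₀ ℕ) → (σ →₀ ℕ) → Prop}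
  {g : ι → MvPowerSeries σ K} {α : ι → σ →₀ ℕ}

/-- The level of the term `coeff ν (a l) • X^ν` in `∑ l, a l * g l` is `ν + α l`, where
`α l` is the lead monomial of `g l`. -/
def levels (α : ι → σ →₀ ℕ) (a : ι → MvPowerSeries σ K) : Set (σ →₀ ℕ) :=
  {δ | ∃ l ν, MvPowerSeries.coeff ν (a l) ≠ 0 ∧ ν + α l = δ}

theorem levels_nonempty [Fintype ι] (a : ι → MvPowerSeries σ K) (ha : ∑ l, a l * g l ≠ 0) :
    (levels α a).Nonempty := by
  by_contra hempty
  refine ha (Finset.sum_eq_zero fun l _ => ?_)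
  have : a l = 0 := MvPowerSeries.ext fun ν => by
    by_contra hν
    exact hempty ⟨_, l, ν, hν, rfl⟩
  rw [this, zero_mul]

noncomputable def levelCoeff (α : ι → σ →₀ ℕ) (γ : σ →₀ ℕ)
    (a : ι → MvPowerSeries σ K) (l : ι) : K :=
  if α l ≤ γ then MvPowerSeries.coeff (γ - α l) (a l) else 0

theorem le_of_levelCoeff_ne_zero {γ : σ →₀ ℕ} {a : ι → MvPowerSeries σ K} {l : ι}
    (h : levelCoeff α γ a l ≠ 0) : α l ≤ γ := by
  by_contra hle
  exact h (if_neg hle)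

theorem coeff_sum_mul_congr [Fintype ι] {a a' : ι → MvPowerSeries σ K} {δ : σ →₀ ℕ}
    (h : ∀ l, ∀ ν ≤ δ, MvPowerSeries.coeff ν (a l) = MvPowerSeries.coeff ν (a' l)) :
    MvPowerSeries.coeff δ (∑ l, a l * g l) = MvPowerSeries.coeff δ (∑ l, a' l * g l) := by
  classical
  simp only [map_sum, MvPowerSeries.coeff_mul]
  refine Finset.sum_congr rfl fun l _ => Finset.sum_congr rfl fun xy hxy => ?_
  rw [h l xy.1 (Finset.HasAntidiagonal.mem_antidiagonal.mp hxy ▸ le_self_add)]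

open scoped Classical in
theorem coeff_monomial_levelCoeff (γ ν : σ →₀ ℕ) (a : ι → MvPowerSeries σ K) (l : ι) :
    MvPowerSeries.coeff ν (MvPowerSeries.monomial (γ - α l) (levelCoeff α γ a l)) =
      if ν + α l = γ then MvPowerSeries.coeff ν (a l) else 0 := by
  rw [MvPowerSeries.coeff_monomial, levelCoeff]
  by_cases hle : α l ≤ γ
  · simp only [if_pos hle, eq_tsub_iff_add_eq_of_le hle]
    split_ifs with h
    · rw [← h, add_tsub_cancel_right]
    · rfl
  · rw [if_neg hle, ite_self, if_neg]
    rintro rfl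
    exact hle le_add_self

theorem rel_of_coeff_sub_levelCoeff {a : ι → MvPowerSeries σ K} {γ ν : σ →₀ ℕ} {l : ι}
    (hγ : ∀ ε ∈ levels α a, ReflGen r γ ε)
    (hν : MvPowerSeries.coeff ν (a l - MvPowerSeries.monomial (γ - α l) (levelCoeff α γ a l))
      ≠ 0) : r γ (ν + α l) := by
  rw [map_sub, coeff_monomial_levelCoeff] at hν
  split_ifs at hν with hνγ
  · exact absurd (sub_self _) hν
  · rw [sub_zero] at hν
    exact (hγ _ ⟨l, ν, hν, rfl⟩).rel_of_ne (Ne.symm hνγ)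

variable (hr : IsLocalOrder r) (hα : ∀ l, IsLeadMonSeries r (g l) (α l))
include hr hα

theorem reflGen_of_coeff_sum_ne_zero [Fintype ι] {a : ι → MvPowerSeries σ K}
    {γ δ : σ →₀ ℕ} (hγ : ∀ ε ∈ levels α a, ReflGen r γ ε)
    (hδ : MvPowerSeries.coeff δ (∑ l, a l * g l) ≠ 0) : ReflGen r γ δ := by
  classical
  rw [map_sum] at hδ
  obtain ⟨l, -, hl⟩ := Finset.exists_ne_zero_of_sum_ne_zero hδ
  rw [MvPowerSeries.coeff_mul] at hl
  obtain ⟨⟨x, y⟩, hxy, hval⟩ := Finset.exists_ne_zero_of_sum_ne_zero hl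
  rw [Finset.HasAntidiagonal.mem_antidiagonal] at hxy
  rw [← hxy]
  exact hr.reflGen_trans (hγ _ ⟨l, x, left_ne_zero_of_mul hval, rfl⟩)
    (hr.reflGen_add_add .refl ((hα l).2 y (right_ne_zero_of_mul hval)))

/-- At the top level `γ` only the lead terms of the `g l` contribute. -/
theorem coeff_sum_eq_levelCoeff [Fintype ι] {a : ι → MvPowerSeries σ K} {γ : σ →₀ ℕ}
    (hγ : ∀ ε ∈ levels α a, ReflGen r γ ε) :
    MvPowerSeries.coeff γ (∑ l, a l * g l) =
      ∑ l, levelCoeff α γ a l * MvPowerSeries.coeff (α l) (g l) := by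
  classical
  rw [map_sum]
  refine Finset.sum_congr rfl fun l _ => ?_
  have hvanish : ∀ x y, x + y = γ → y ≠ α l →
      MvPowerSeries.coeff x (a l) * MvPowerSeries.coeff y (g l) = 0 := by
    intro x y hxy hy
    by_contra hval
    have hlt := hr.rel_add_add (.refl (a := x)) ((hα l).2 y (right_ne_zero_of_mul hval))
      (by simpa using hy.symm)
    rw [hxy] at hlt
    exact hr.irrefl _ (hr.reflGen_trans_rel (hγ _ ⟨l, x, left_ne_zero_of_mul hval, rfl⟩) hlt)
  rw [MvPowerSeries.coeff_mul, levelCoeff]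
  split_ifs with hle
  · refine Finset.sum_eq_single_of_mem (γ - α l, α l)
      (by simp [Finset.HasAntidiagonal.mem_antidiagonal, tsub_add_cancel_of_le hle])
      fun ⟨x, y⟩ hxy hne => hvanish x y (Finset.HasAntidiagonal.mem_antidiagonal.mp hxy) ?_
    rintro rfl
    exact hne (by rw [← Finset.HasAntidiagonal.mem_antidiagonal.mp hxy, add_tsub_cancel_right])
  · rw [zero_mul]
    refine Finset.sum_eq_zero fun ⟨x, y⟩ hxy => hvanish x y
      (Finset.HasAntidiagonal.mem_antidiagonal.mp hxy) ?_
    rintro rfl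
    exact hle (Finset.HasAntidiagonal.mem_antidiagonal.mp hxy ▸ le_add_self)

end Levels

section SpolyRep

variable {ι σ K : Type*} [Fintype ι] [Field K] {r : (σ →₀ ℕ) → (σ →₀ ℕ) → Prop}
  {g : ι → MvPowerSeries σ K} {α : ι → σ →₀ ℕ}
  {b : ι → ι → ι → MvPowerSeries σ K}

/-- `b i j` is a standard representation of the S-series of `g i` and `g j`. -/
def IsSpolyRep (r : (σ →₀ ℕ) → (σ →₀ ℕ) → Prop) (g : ι → MvPowerSeries σ K)
    (α : ι → σ →₀ ℕ) (b : ι → ι → ι → MvPowerSeries σ K) : Prop :=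
  ∀ i j, ∑ l, b i j l * g l = MvPowerSeries.spoly (g i) (g j) (α i) (α j) ∧
    ∀ l τ, MvPowerSeries.coeff τ (b i j l) ≠ 0 → r (α i ⊔ α j) (τ + α l)

/-- Position `(l, ν)` receives a term when a multiple `X^ε • spoly(g p, g q)` at level `γ` is
replaced by its standard representation. -/
def SpolyTouches (α : ι → σ →₀ ℕ) (b : ι → ι → ι → MvPowerSeries σ K) (γ : σ →₀ ℕ)
    (l : ι) (ν : σ →₀ ℕ) : Prop :=
  ∃ p q ε τ, MvPowerSeries.coeff τ (b p q l) ≠ 0 ∧ γ = ε + (α p ⊔ α q) ∧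
    ν = ε + τ

/-- The positions `(l, ν)` that the cancellation of the level-`γ` terms may change. -/
def Touches (α : ι → σ →₀ ℕ) (b : ι → ι → ι → MvPowerSeries σ K) (γ : σ →₀ ℕ)
    (l : ι) (ν : σ →₀ ℕ) : Prop :=
  ν + α l = γ ∨ SpolyTouches α b γ l ν

theorem touches_finite (l : ι) (ν : σ →₀ ℕ) : {γ | Touches α b γ l ν}.Finite := by
  classical
  refine ((Set.finite_singleton (ν + α l)).union (Set.finite_iUnion fun p =>
    Set.finite_iUnion fun q => (Set.finite_Iic ν).image (· + (α p ⊔ α q)))).subset ?_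
  rintro γ (h | ⟨p, q, ε, τ, -, rfl, rfl⟩)
  · exact .inl h.symm
  · exact .inr (Set.mem_iUnion₂.mpr ⟨p, q, ε, Set.mem_Iic.mpr le_self_add, rfl⟩)

theorem IsSpolyRep.rel_of_spolyTouches (hr : IsLocalOrder r) (hb : IsSpolyRep r g α b)
    {γ ν : σ →₀ ℕ} {l : ι} (h : SpolyTouches α b γ l ν) : r γ (ν + α l) := by
  obtain ⟨p, q, ε, τ, hτ, rfl, rfl⟩ := h
  rw [add_assoc]
  exact hr.add_left ε ((hb p q).2 l τ hτ)

theorem IsSpolyRep.exists_sum_eq (hb : IsSpolyRep r g α b)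
    (hlc : ∀ i, MvPowerSeries.coeff (α i) (g i) ≠ 0) {γ : σ →₀ ℕ} {c : ι → K}
    (hc : ∀ i, c i ≠ 0 → α i ≤ γ)
    (hsum : ∑ i, c i * MvPowerSeries.coeff (α i) (g i) = 0) :
    ∃ d : ι → MvPowerSeries σ K,
      ∑ l, d l * g l = ∑ i, MvPowerSeries.monomial (γ - α i) (c i) * g i ∧
      ∀ l ν, MvPowerSeries.coeff ν (d l) ≠ 0 → SpolyTouches α b γ l ν := by
  classical
  by_cases hzero : ∀ i, c i = 0
  · exact ⟨0, by simp [hzero], fun l ν h => absurd (by simp) h⟩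
  obtain ⟨j, hj⟩ := not_forall.mp hzero
  have hlcm : ∀ i, c i ≠ 0 → α i ⊔ α j ≤ γ := fun i hi => sup_le (hc i hi) (hc j hj)
  let e : ι → MvPowerSeries σ K := fun i =>
    MvPowerSeries.monomial (γ - α i ⊔ α j) (c i * MvPowerSeries.coeff (α i) (g i))
  refine ⟨fun l => ∑ i, e i * b i j l, ?_, fun l ν hν => ?_⟩
  · calc ∑ l, (∑ i, e i * b i j l) * g l
        = ∑ i, e i * MvPowerSeries.spoly (g i) (g j) (α i) (α j) := by
          simp_rw [Finset.sum_mul, ← (hb _ j).1, Finset.mul_sum, mul_assoc]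
          exact Finset.sum_comm
      _ = _ := MvPowerSeries.sum_monomial_mul_spoly hlc hlcm hsum
  · rw [map_sum] at hν
    obtain ⟨i, -, hi⟩ := Finset.exists_ne_zero_of_sum_ne_zero hν
    rw [MvPowerSeries.coeff_monomial_mul] at hi
    split_ifs at hi with hle
    · have hci : c i ≠ 0 := fun h => hi (by simp [h])
      refine ⟨i, j, γ - α i ⊔ α j, ν - (γ - α i ⊔ α j), right_ne_zero_of_mul hi, ?_,
        ?_⟩
      · rw [tsub_add_cancel_of_le (hlcm i hci)]
      · rw [add_tsub_cancel_of_le hle]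
    · exact absurd rfl hi

end SpolyRep

section TopLevelRep

variable {ι σ K : Type*} [Fintype ι] [Field K] {r : (σ →₀ ℕ) → (σ →₀ ℕ) → Prop}
  {g : ι → MvPowerSeries σ K} {α : ι → σ →₀ ℕ} {h : MvPowerSeries σ K}

structure TopLevelRep (r : (σ →₀ ℕ) → (σ →₀ ℕ) → Prop) (g : ι → MvPowerSeries σ K)
    (α : ι → σ →₀ ℕ) (h : MvPowerSeries σ K) where
  a : ι → MvPowerSeries σ K
  top : σ →₀ ℕ
  sum_eq : ∑ l, a l * g l = h
  top_mem : top ∈ levels α a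
  reflGen_top : ∀ δ ∈ levels α a, ReflGen r top δ

namespace TopLevelRep

theorem exists_of_sum_eq [Finite σ] (hr : IsLocalOrder r) (hh : h ≠ 0)
    (a : ι → MvPowerSeries σ K) (ha : ∑ l, a l * g l = h) :
    ∃ A : TopLevelRep r g α h, A.a = a := by
  obtain ⟨γ, hγ, hmax⟩ := hr.exists_reflGen_forall (levels_nonempty (α := α) a (ha ▸ hh))
  exact ⟨⟨a, γ, ha, hγ, hmax⟩, rfl⟩

/-- The order for Zorn's lemma: `B` lowers the top of `A`, and a coefficient may change only at
a position `T`-touched by a level `γ` passed on the way (`A.top ⪰ γ ≻ B.top`). -/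
def Le (T : (σ →₀ ℕ) → ι → (σ →₀ ℕ) → Prop) (A B : TopLevelRep r g α h) : Prop :=
  ReflGen r A.top B.top ∧
    ∀ l ν, MvPowerSeries.coeff ν (B.a l) ≠ MvPowerSeries.coeff ν (A.a l) →
      ∃ γ, T γ l ν ∧ ReflGen r A.top γ ∧ r γ B.top

variable {T : (σ →₀ ℕ) → ι → (σ →₀ ℕ) → Prop}

theorem Le.refl (A : TopLevelRep r g α h) : A.Le T A :=
  ⟨.refl, fun _ _ hne => absurd rfl hne⟩

instance : Std.Refl (Le T : TopLevelRep r g α h → TopLevelRep r g α h → Prop) :=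
  ⟨Le.refl⟩

theorem Le.trans (hr : IsLocalOrder r) {A B C : TopLevelRep r g α h} (hAB : A.Le T B)
    (hBC : B.Le T C) : A.Le T C := by
  refine ⟨hr.reflGen_trans hAB.1 hBC.1, fun l ν hne => ?_⟩
  by_cases hCB : MvPowerSeries.coeff ν (C.a l) = MvPowerSeries.coeff ν (B.a l)
  · obtain ⟨γ, hγ, hAγ, hγB⟩ := hAB.2 l ν (hCB ▸ hne)
    exact ⟨γ, hγ, hAγ, hr.trans_reflGen hγB hBC.1⟩
  · obtain ⟨γ, hγ, hBγ, hγC⟩ := hBC.2 l ν hCB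
    exact ⟨γ, hγ, hr.reflGen_trans hAB.1 hBγ, hγC⟩

/-- The rewriting step: while the top lies strictly above the lead monomial `β` of `h`, the
terms at the top level cancel and can be rewritten through the S-series representations. -/
theorem exists_le_of_rel [Finite σ] (hr : IsLocalOrder r)
    (hα : ∀ l, IsLeadMonSeries r (g l) (α l)) {b : ι → ι → ι → MvPowerSeries σ K}
    (hb : IsSpolyRep r g α b) {β : σ →₀ ℕ} (hβ : IsLeadMonSeries r h β)
    (A : TopLevelRep r g α h) (hA : r A.top β) :
    ∃ B : TopLevelRep r g α h, A.Le (Touches α b) B ∧ r A.top B.top := by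
  classical
  set γ := A.top
  set c := levelCoeff α γ A.a
  have hsum : ∑ i, c i * MvPowerSeries.coeff (α i) (g i) = 0 := by
    rw [← coeff_sum_eq_levelCoeff hr hα A.reflGen_top, A.sum_eq, hβ.coeff_eq_zero_of_rel hr hA]
  obtain ⟨d, hd, hdT⟩ :=
    hb.exists_sum_eq (fun i => (hα i).1) (fun _ => le_of_levelCoeff_ne_zero) hsum
  set a' : ι → MvPowerSeries σ K := fun l =>
    A.a l - MvPowerSeries.monomial (γ - α l) (c l) + d l
  have ha' : ∑ l, a' l * g l = h := by
    simp only [a', add_mul, sub_mul, Finset.sum_add_distrib, Finset.sum_sub_distrib, hd,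
      A.sum_eq]
    exact sub_add_cancel _ _
  have hlev : ∀ l ν, MvPowerSeries.coeff ν (a' l) ≠ 0 → r γ (ν + α l) := by
    intro l ν hν
    by_cases hdν : MvPowerSeries.coeff ν (d l) = 0
    · exact rel_of_coeff_sub_levelCoeff A.reflGen_top (by simpa [a', hdν] using hν)
    · exact hb.rel_of_spolyTouches hr (hdT l ν hdν)
  obtain ⟨B, hBa⟩ := exists_of_sum_eq (α := α) hr hβ.ne_zero a' ha'
  have hB : r γ B.top := by
    obtain ⟨l, ν, hν, hνB⟩ := B.top_mem
    exact hνB ▸ hlev l ν (hBa ▸ hν)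
  refine ⟨B, ⟨.single hB, fun l ν hne => ⟨γ, ?_, .refl, hB⟩⟩, hB⟩
  by_cases hdν : MvPowerSeries.coeff ν (d l) = 0
  · have hslice : MvPowerSeries.coeff ν (MvPowerSeries.monomial (γ - α l) (c l)) ≠ 0 := by
      intro h0
      apply hne
      simp [hBa, a', h0, hdν]
    rw [coeff_monomial_levelCoeff] at hslice
    split_ifs at hslice with hνγ
    · exact .inl hνγ
    · exact absurd rfl hslice
  · exact .inr (hdT l ν hdν)

theorem exists_ub_of_finset (hr : IsLocalOrder r) {C : Set (TopLevelRep r g α h)}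
    (hC : IsChain (Le T) C) {A : TopLevelRep r g α h} (hA : A ∈ C)
    (s : Finset (TopLevelRep r g α h)) (hs : ↑s ⊆ C) :
    ∃ X ∈ C, A.Le T X ∧ ∀ Y ∈ s, Y.Le T X := by
  classical
  induction s using Finset.induction_on with
  | empty => exact ⟨A, hA, .refl A, by simp⟩
  | insert Y s _ ih =>
    rw [Finset.coe_insert, Set.insert_subset_iff] at hs
    obtain ⟨X, hX, hAX, hsX⟩ := ih hs.2
    obtain ⟨Z, hZ, hYZ, hXZ⟩ := hC.directedOn Y hs.1 X hX
    refine ⟨Z, hZ, hAX.trans hr hXZ, (Finset.forall_mem_insert _ _ _).mpr ⟨hYZ, ?_⟩⟩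
    exact fun W hW => (hsX W hW).trans hr hXZ

/-- Along a chain a coefficient can only change when the top passes one of the finitely many
levels touching its position, so it is eventually constant. -/
theorem exists_settled (hr : IsLocalOrder r) (hT : ∀ l ν, {γ | T γ l ν}.Finite)
    {C : Set (TopLevelRep r g α h)} (hC : IsChain (Le T) C) {A₀ : TopLevelRep r g α h}
    (hA₀ : A₀ ∈ C) (l : ι) (ν : σ →₀ ℕ) :
    ∃ X ∈ C, ∀ B ∈ C, X.Le T B →
      MvPowerSeries.coeff ν (B.a l) = MvPowerSeries.coeff ν (X.a l) := by
  classical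
  have hwit : ∀ γ, ∃ W ∈ C, (∃ B ∈ C, r γ B.top) → r γ W.top := fun γ => by
    by_cases hγ : ∃ B ∈ C, r γ B.top
    · obtain ⟨B, hB, hγB⟩ := hγ
      exact ⟨B, hB, fun _ => hγB⟩
    · exact ⟨A₀, hA₀, fun h => absurd h hγ⟩
  choose w hwC hw using hwit
  obtain ⟨X, hX, -, hwX⟩ := exists_ub_of_finset hr hC hA₀ ((hT l ν).toFinset.image w)
    (by simpa [Set.subset_def] using fun γ _ => hwC γ)
  refine ⟨X, hX, fun B hB hXB => by_contra fun hne => ?_⟩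
  obtain ⟨γ, hγ, hXγ, hγB⟩ := hXB.2 l ν hne
  have hwγ := (hwX (w γ) (Finset.mem_image_of_mem w ((hT l ν).mem_toFinset.mpr hγ))).1
  exact hr.irrefl _ (hr.reflGen_trans_rel (hr.reflGen_trans hwγ hXγ) (hw γ ⟨B, hB, hγB⟩))

/-- The coefficientwise limit of a chain is an upper bound for it. -/
theorem exists_forall_le_of_isChain [Finite σ] (hr : IsLocalOrder r)
    (hT : ∀ l ν, {γ | T γ l ν}.Finite) (hh : h ≠ 0) {C : Set (TopLevelRep r g α h)}
    (hC : IsChain (Le T) C) (hne : C.Nonempty) : ∃ U, ∀ A ∈ C, A.Le T U := by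
  classical
  obtain ⟨A₀, hA₀⟩ := hne
  choose X hXC hX using exists_settled hr hT hC hA₀
  let a : ι → MvPowerSeries σ K := fun l ν => MvPowerSeries.coeff ν ((X l ν).a l)
  have hlate : ∀ (P : Finset (ι × (σ →₀ ℕ))) (A : TopLevelRep r g α h), A ∈ C →
      ∃ B ∈ C, A.Le T B ∧
        ∀ p ∈ P, MvPowerSeries.coeff p.2 (B.a p.1) = MvPowerSeries.coeff p.2 (a p.1) := by
    intro P A hA
    obtain ⟨B, hB, hAB, hXB⟩ := exists_ub_of_finset hr hC hA (P.image fun p => X p.1 p.2)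
      (by
        intro Y hY
        obtain ⟨p, -, rfl⟩ := Finset.mem_image.mp hY
        exact hXC p.1 p.2)
    exact ⟨B, hB, hAB, fun p hp => hX p.1 p.2 B hB (hXB _ (Finset.mem_image_of_mem _ hp))⟩
  have ha : ∑ l, a l * g l = h := by
    ext δ
    obtain ⟨B, -, -, hB⟩ := hlate (Finset.univ ×ˢ Finset.Iic δ) A₀ hA₀
    rw [← B.sum_eq]
    exact coeff_sum_mul_congr fun l ν hν => (hB (l, ν) (by simpa using hν)).symm
  obtain ⟨U, hUa⟩ := exists_of_sum_eq (α := α) hr hh a ha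
  have htop : ∀ A ∈ C, ReflGen r A.top U.top := by
    intro A hA
    obtain ⟨l, ν, hν, hνU⟩ := U.top_mem
    obtain ⟨B, -, hAB, hBa⟩ := hlate {(l, ν)} A hA
    have hBν : MvPowerSeries.coeff ν (B.a l) ≠ 0 := by
      rwa [hBa (l, ν) (Finset.mem_singleton_self _), ← hUa]
    exact hr.reflGen_trans hAB.1 (B.reflGen_top _ ⟨l, ν, hBν, hνU⟩)
  refine ⟨U, fun A hA => ⟨htop A hA, fun l ν hne => ?_⟩⟩
  obtain ⟨B, hB, hAB, hBa⟩ := hlate {(l, ν)} A hA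
  obtain ⟨γ, hγ, hAγ, hγB⟩ :=
    hAB.2 l ν (by rwa [hBa (l, ν) (Finset.mem_singleton_self _), ← hUa])
  exact ⟨γ, hγ, hAγ, hr.trans_reflGen hγB (htop B hB)⟩

end TopLevelRep

/-- By the rewriting step, a maximal representation has its top at the lead monomial `β`. -/
theorem IsSpolyRep.exists_add_eq [Finite σ] (hr : IsLocalOrder r)
    (hα : ∀ l, IsLeadMonSeries r (g l) (α l)) {b : ι → ι → ι → MvPowerSeries σ K}
    (hb : IsSpolyRep r g α b) {β : σ →₀ ℕ} (hβ : IsLeadMonSeries r h β)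
    (c : ι → MvPowerSeries σ K) (hc : ∑ l, c l * g l = h) : ∃ i ν, β = ν + α i := by
  obtain ⟨A₀, -⟩ := TopLevelRep.exists_of_sum_eq (α := α) hr hβ.ne_zero c hc
  have : Nonempty (TopLevelRep r g α h) := ⟨A₀⟩
  obtain ⟨M, hM⟩ := exists_maximal_of_nonempty_chains_bounded
    (r := (TopLevelRep.Le (Touches α b) : TopLevelRep r g α h → _ → Prop))
    (fun _ hC hne => TopLevelRep.exists_forall_le_of_isChain hr touches_finite hβ.ne_zero hC hne)
    (fun hAB hBC => hAB.trans hr hBC)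
  rcases reflGen_of_coeff_sum_ne_zero hr hα M.reflGen_top (M.sum_eq ▸ hβ.1) with _ | hlt
  · obtain ⟨l, ν, -, hν⟩ := M.top_mem
    exact ⟨l, ν, hν.symm⟩
  · obtain ⟨B, hMB, hB⟩ := M.exists_le_of_rel hr hα hb hβ hlt
    exact absurd (hM B hMB).1 (hr.not_reflGen_of_rel hB)

end TopLevelRep

namespace MvPolynomial

variable {σ R : Type*}

@[simp, norm_cast]
theorem coe_sub [CommRing R] (φ ψ : MvPolynomial σ R) :
    ((φ - ψ : MvPolynomial σ R) : MvPowerSeries σ R) = φ - ψ :=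
  map_sub coeToMvPowerSeries.ringHom φ ψ

@[simp, norm_cast]
theorem coe_sum [CommSemiring R] {ι : Type*} (s : Finset ι) (φ : ι → MvPolynomial σ R) :
    ((∑ i ∈ s, φ i : MvPolynomial σ R) : MvPowerSeries σ R) =
      ∑ i ∈ s, (φ i : MvPowerSeries σ R) :=
  map_sum coeToMvPowerSeries.ringHom φ s

end MvPolynomial

section Criterion

variable {n s : ℕ} {K : Type*} [Field K] {r : (Fin n →₀ ℕ) → (Fin n →₀ ℕ) → Prop}
  {G : Fin s → MvPolynomial (Fin n) K} {α : Fin s → Fin n →₀ ℕ}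

theorem coe_spoly (f g : MvPolynomial (Fin n) K) (a b : Fin n →₀ ℕ) :
    (spoly f g a b : MvPowerSeries (Fin n) K) = MvPowerSeries.spoly f g a b := by
  simp [spoly, MvPowerSeries.spoly, C_mul_monomial, MvPolynomial.coeff_coe]

/-- `NF(spoly(G i, G j) | G) = 0` for a weak normal form `NF`: there are a unit `u` (lead
monomial `0`) and a standard representation `u * spoly(G i, G j) = ∑ l, a l * G l`. -/
def SpolyHasZeroWeakNF (r : (Fin n →₀ ℕ) → (Fin n →₀ ℕ) → Prop)
    (G : Fin s → MvPolynomial (Fin n) K) (α : Fin s → Fin n →₀ ℕ) (i j : Fin s) : Prop :=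
  ∃ (u : MvPolynomial (Fin n) K) (a : Fin s → MvPolynomial (Fin n) K),
    IsLeadMon r u 0 ∧
    u * spoly (G i) (G j) (α i) (α j) = ∑ l, a l * G l ∧
    ∀ l, a l ≠ 0 → ∃ μ ν, IsLeadMon r (spoly (G i) (G j) (α i) (α j)) μ ∧
      IsLeadMon r (a l * G l) ν ∧ (r μ ν ∨ μ = ν)

/-- Dividing by the unit `u` in `K[[X]]` turns a weak normal form `0` into a standard
representation of the S-series. -/
theorem SpolyHasZeroWeakNF.exists_rep (hr : IsLocalOrder r) (hα : ∀ i, IsLeadMon r (G i) (α i))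
    {i j : Fin s} (h : SpolyHasZeroWeakNF r G α i j) :
    ∃ b : Fin s → MvPowerSeries (Fin n) K,
      ∑ l, b l * G l = MvPowerSeries.spoly (G i) (G j) (α i) (α j) ∧
      ∀ l τ, MvPowerSeries.coeff τ (b l) ≠ 0 → r (α i ⊔ α j) (τ + α l) := by
  obtain ⟨u, a, hu, hua, ha⟩ := h
  have hu0 : MvPowerSeries.constantCoeff (u : MvPowerSeries (Fin n) K) ≠ 0 :=
    hr.isLeadMonSeries_zero_iff.1 hu.coe
  have hinv : IsLeadMonSeries r (u : MvPowerSeries (Fin n) K)⁻¹ 0 :=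
    hr.isLeadMonSeries_zero_iff.2 (by simpa [MvPowerSeries.constantCoeff_inv] using hu0)
  refine ⟨fun l => (u : MvPowerSeries (Fin n) K)⁻¹ * a l, ?_, fun l τ hτ => ?_⟩
  · calc ∑ l, (u : MvPowerSeries (Fin n) K)⁻¹ * a l * G l
        = (u : MvPowerSeries (Fin n) K)⁻¹ * ((u * spoly (G i) (G j) (α i) (α j) :
            MvPolynomial (Fin n) K) : MvPowerSeries (Fin n) K) := by
          simp [hua, Finset.mul_sum, mul_assoc]
      _ = _ := by
          rw [MvPolynomial.coe_mul, ← mul_assoc, MvPowerSeries.inv_mul_cancel _ hu0, one_mul,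
            coe_spoly]
  · have hal : a l ≠ 0 := by
      rintro hal
      simp [hal] at hτ
    obtain ⟨μ, ν, hμ, hν, hμν⟩ := ha l hal
    have hlead : IsLeadMonSeries r ((u : MvPowerSeries (Fin n) K)⁻¹ *
        (a l : MvPowerSeries (Fin n) K) * (G l : MvPowerSeries (Fin n) K)) ν := by
      simpa [mul_assoc] using hinv.mul hr hν.coe
    have hμ' : r (α i ⊔ α j) μ := by
      refine MvPowerSeries.rel_sup_of_coeff_spoly_ne_zero hr (hα i).coe (hα j).coe ?_
      rw [← coe_spoly, MvPolynomial.coeff_coe]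
      exact mem_support_iff.mp hμ.1
    refine hr.trans_reflGen hμ' (hr.reflGen_trans ?_
      (hr.reflGen_add_of_isLeadMonSeries_mul hlead (hα l).coe hτ))
    rcases hμν with hμν | rfl
    exacts [.single hμν, .refl]

theorem exists_isSpolyRep (hr : IsLocalOrder r) (hα : ∀ i, IsLeadMon r (G i) (α i))
    (hNF : ∀ i j, i ≠ j → SpolyHasZeroWeakNF r G α i j) :
    ∃ b, IsSpolyRep r (fun l => (G l : MvPowerSeries (Fin n) K)) α b := by
  choose b hb using fun i j (hij : i ≠ j) => (hNF i j hij).exists_rep hr hα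
  refine ⟨fun i j => if hij : i = j then 0 else b i j hij, fun i j => ?_⟩
  by_cases hij : i = j
  · subst hij
    simp
  · simpa [hij] using hb i j hij

theorem exists_add_eq_of_mul_mem_span (hr : IsLocalOrder r)
    (hα : ∀ i, IsLeadMon r (G i) (α i)) (hNF : ∀ i j, i ≠ j → SpolyHasZeroWeakNF r G α i j)
    {u f : MvPolynomial (Fin n) K} {β : Fin n →₀ ℕ} (hu : u ∈ unitSet n K)
    (hf : IsLeadMon r f β) (huf : u * f ∈ Ideal.span (Set.range G)) :
    ∃ i ν, β = ν + α i := by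
  obtain ⟨b, hb⟩ := exists_isSpolyRep hr hα hNF
  obtain ⟨c, hc⟩ := Ideal.mem_span_range_iff_exists_fun.mp huf
  have hu' : IsLeadMonSeries r (u : MvPowerSeries (Fin n) K) 0 := by
    rw [hr.isLeadMonSeries_zero_iff, ← MvPowerSeries.coeff_zero_eq_constantCoeff_apply,
      MvPolynomial.coeff_coe, ← MvPolynomial.constantCoeff_eq]
    simp_all [unitSet]
  refine hb.exists_add_eq hr (fun l => (hα l).coe) (by simpa using hu'.mul hr hf.coe)
    (fun l => c l) ?_
  rw [← MvPolynomial.coe_mul, ← hc]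
  simp

end Criterion

theorem buchberger_criterion_standard_basis_general {n s : ℕ} {K : Type*} [Field K]
    (r : (Fin n →₀ ℕ) → (Fin n →₀ ℕ) → Prop) (hr : IsLocalOrder r)
    (G : Fin s → MvPolynomial (Fin n) K)
    (α : Fin s → (Fin n →₀ ℕ)) (hα : ∀ i, IsLeadMon r (G i) (α i))
    (I : Ideal (Localization (unitSet n K)))
    (hgen : I = Ideal.span (Set.range fun i =>
      algebraMap (MvPolynomial (Fin n) K) (Localization (unitSet n K)) (G i)))
    (hNF : ∀ i j : Fin s, i ≠ j →
      ∃ (u : MvPolynomial (Fin n) K) (a : Fin s → MvPolynomial (Fin n) K),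
        IsLeadMon r u 0 ∧
        u * spoly (G i) (G j) (α i) (α j) = ∑ l, a l * G l ∧
        ∀ l, a l ≠ 0 → ∃ μ ν, IsLeadMon r (spoly (G i) (G j) (α i) (α j)) μ ∧
          IsLeadMon r (a l * G l) ν ∧ (r μ ν ∨ μ = ν)) :
    Ideal.span {m : MvPolynomial (Fin n) K | ∃ f : MvPolynomial (Fin n) K,
        algebraMap (MvPolynomial (Fin n) K) (Localization (unitSet n K)) f ∈ I ∧
        ∃ β, IsLeadMon r f β ∧ m = monomial β (f.coeff β)}
      = Ideal.span {m : MvPolynomial (Fin n) K |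
          ∃ i : Fin s, m = monomial (α i) ((G i).coeff (α i))} := by
  have hI : I = (Ideal.span (Set.range G)).map (algebraMap _ (Localization (unitSet n K))) := by
    rw [hgen, Ideal.map_span, ← Set.range_comp]
    rfl
  apply le_antisymm
  · rw [Ideal.span_le]
    rintro _ ⟨f, hfI, β, hβ, rfl⟩
    rw [hI, IsLocalization.algebraMap_mem_map_algebraMap_iff (unitSet n K)] at hfI
    obtain ⟨u, hu, huf⟩ := hfI
    obtain ⟨i, ν, rfl⟩ := exists_add_eq_of_mul_mem_span hr hα hNF hu hβ huf
    have hlc : (G i).coeff (α i) ≠ 0 := mem_support_iff.mp (hα i).1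
    rw [← inv_mul_cancel_right₀ hlc (f.coeff _), ← monomial_mul]
    exact Ideal.mul_mem_left _ _ (Ideal.subset_span ⟨i, rfl⟩)
  · rw [Ideal.span_le]
    rintro _ ⟨i, rfl⟩
    exact Ideal.subset_span ⟨G i, hgen ▸ Ideal.subset_span ⟨i, rfl⟩, α i, hα i, rfl⟩

/-- Buchberger's criterion for standard bases: if `G = {g₁,...,g_s}` generates the ideal
`I ⊆ Loc_>(K[X])` and every S-polynomial `spoly(gᵢ,gⱼ)` has a weak normal form `0` with
respect to `G`, then `G` is a standard basis: `lt(I) = ⟨lt(g₁),...,lt(g_s)⟩`. -/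
theorem buchberger_criterion_standard_basis {n s : ℕ} {K : Type*} [Field K]
    (r : (Fin n →₀ ℕ) → (Fin n →₀ ℕ) → Prop) (hr : IsLocalOrder r)
    (G : Fin s → MvPolynomial (Fin n) K) (hG : ∀ i, G i ≠ 0)
    (α : Fin s → (Fin n →₀ ℕ)) (hα : ∀ i, IsLeadMon r (G i) (α i))
    (I : Ideal (Localization (unitSet n K)))
    (hgen : I = Ideal.span (Set.range fun i =>
      algebraMap (MvPolynomial (Fin n) K) (Localization (unitSet n K)) (G i)))
    (hNF : ∀ i j : Fin s, i ≠ j →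
      ∃ (u : MvPolynomial (Fin n) K) (a : Fin s → MvPolynomial (Fin n) K),
        IsLeadMon r u 0 ∧
        u * spoly (G i) (G j) (α i) (α j) = ∑ l, a l * G l ∧
        ∀ l, a l ≠ 0 → ∃ μ ν, IsLeadMon r (spoly (G i) (G j) (α i) (α j)) μ ∧
          IsLeadMon r (a l * G l) ν ∧ (r μ ν ∨ μ = ν)) :
    Ideal.span {m : MvPolynomial (Fin n) K | ∃ f : MvPolynomial (Fin n) K,
        algebraMap (MvPolynomial (Fin n) K) (Localization (unitSet n K)) f ∈ I ∧
        ∃ β, IsLeadMon r f β ∧ m = monomial β (f.coeff β)}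
      = Ideal.span {m : MvPolynomial (Fin n) K |
          ∃ i : Fin s, m = monomial (α i) ((G i).coeff (α i))} :=
  buchberger_criterion_standard_basis_general r hr G α hα I hgen hNF
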